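/- Semigroup/Chapman–Kolmogorov property of the transition kernel G: with deterministic nonnegative intensities λ_{EF} satisfying λ_{EF}=0 unless F=E∪{i} for i∉E, define G(s,t;E,F) as in the paper: G(s,t;E,E)=exp(−∫_s^t λ_E(u)du) with λ_E = ∑_{i∉E} λ_{E,E∪{i}}, and for E ⊂ F, G(s,t;E,F) = ∑_{π ∈ Π(F/E)} H_{|F/E|}(s,t;F_0^π,…,F^π_{|F/E|}) where H is the iterated integral H_{k+1}(s,t;F₀,…,F_{k+1}) = ∫_s^t λ_{F_k F_{k+1}}(v) e^{−∫_v^t λ_{F_{k+1}}(u)du} H_k(s,v;F₀,…,F_k) dv and H₀(s,t;E)=e^{−∫_s^t λ_E(u)du}. Then for 0 ≤ s ≤ u ≤ t and E ⊆ F: G(s,t;E,F) = ∑_{E ⊆ D ⊆ F} G(s,u;E,D) · G(u,t;D,F). -/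

import Mathlib

open Finset MeasureTheory intervalIntegral

/-- Total intensity `λ_E = ∑_{i ∉ E} λ_{E, E∪{i}}` out of the defaulted set `E`. -/
noncomputable def lamTot {ι : Type*} [Fintype ι] [DecidableEq ι]
    (lam : Finset ι → Finset ι → ℝ → ℝ) (E : Finset ι) (t : ℝ) : ℝ :=
  ∑ i ∈ Eᶜ, lam E (insert i E) t

/-- The iterated-integral functional `H` along a default ordering (equations
(3.5)–(3.7) of the paper, written via the first default after `s`):
`H(E, [], s, t) = e^{−∫_s^t λ_E}` and
`H(E, i::L, s, t) = ∫_s^t e^{−∫_s^v λ_E} λ_{E,E∪{i}}(v) H(E∪{i}, L, v, t) dv`. -/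
noncomputable def Hchain {ι : Type*} [Fintype ι] [DecidableEq ι]
    (lam : Finset ι → Finset ι → ℝ → ℝ) : Finset ι → List ι → ℝ → ℝ → ℝ
  | E, [], s, t => Real.exp (-(∫ u in s..t, lamTot lam E u))
  | E, i :: L, s, t =>
      ∫ v in s..t, Real.exp (-(∫ u in s..v, lamTot lam E u))
        * lam E (insert i E) v * Hchain lam (insert i E) L v t

/-- The transition kernel `G(s,t;E,F) = ∑_{π ∈ Π(F∖E)} H_{|F∖E|}(s,t;F₀^π,…)`
(with `G(s,t;E,E) = e^{−∫_s^t λ_E}`). -/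
noncomputable def Gker {ι : Type*} [Fintype ι] [DecidableEq ι]
    (lam : Finset ι → Finset ι → ℝ → ℝ) (E F : Finset ι) (s t : ℝ) : ℝ :=
  (((F \ E).toList.permutations).map (fun L => Hchain lam E L s t)).sum

/-!
Condition on the first default after `s`: with `ρ_{E,i}(s,v) = e^{-∫_s^v λ_E} λ_{E,E∪{i}}(v)`,
`G(s,t;E,F) = ∑_{i ∈ F∖E} ∫_s^t ρ_{E,i}(s,v) G(v,t;E∪{i},F) dv`. Split this integral at `u`.
For `v ≥ u` one has `ρ_{E,i}(s,v) = G(s,u;E,E) ρ_{E,i}(u,v)` (no default in `[s,u]`), so the part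
over `[u,t]` is `G(s,u;E,E) G(u,t;E,F)`. On `[s,u]`, expand `G(v,t;E∪{i},F)` by the
Chapman–Kolmogorov identity itself (induction on `|F∖E|`) and regroup by the state `D` at time
`u`: the first-jump decomposition, read backwards, gives `∑_{E ⊊ D ⊆ F} G(s,u;E,D) G(u,t;D,F)`.
-/

section ExpNegIntegral

variable {f g : ℝ → ℝ} (hf : ∀ a b, IntervalIntegrable f volume a b)
include hf

lemma exp_neg_integral_eq_mul (a b c : ℝ) :
    Real.exp (-∫ u in a..c, f u)
      = Real.exp (-∫ u in a..b, f u) * Real.exp (-∫ u in b..c, f u) := by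
  rw [← integral_add_adjacent_intervals (hf a b) (hf b c), neg_add, Real.exp_add]

lemma continuous_exp_neg_integral_upper (s : ℝ) :
    Continuous fun v => Real.exp (-∫ u in s..v, f u) :=
  (continuous_primitive hf s).neg.rexp

lemma continuous_exp_neg_integral_lower (t : ℝ) :
    Continuous fun v => Real.exp (-∫ u in v..t, f u) := by
  simpa only [intervalIntegral.integral_symm t, neg_neg] using (continuous_primitive hf t).rexp

lemma continuous_integral_exp_neg_integral_mul_lower
    (hg : ∀ a b, IntervalIntegrable g volume a b) (t : ℝ) :
    Continuous fun s => ∫ v in s..t, Real.exp (-∫ u in s..v, f u) * g v := by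
  set k := fun v => Real.exp (-∫ u in 0..v, f u) * g v
  have hk : ∀ a b, IntervalIntegrable k volume a b := fun a b =>
    (hg a b).continuousOn_mul (continuous_exp_neg_integral_upper hf 0).continuousOn
  -- factoring `e^{-∫_s^v f} = e^{∫_0^s f} e^{-∫_0^v f}` leaves `s` only in a constant and a limit
  have hfactor : ∀ s, ∫ v in s..t, Real.exp (-∫ u in s..v, f u) * g v
      = Real.exp (∫ u in 0..s, f u) * -∫ v in t..s, k v := by
    intro s
    rw [← intervalIntegral.integral_symm, ← intervalIntegral.integral_const_mul]
    refine integral_congr fun v _ => ?_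
    rw [exp_neg_integral_eq_mul hf s 0 v, intervalIntegral.integral_symm 0 s, neg_neg, mul_assoc]
  simp only [hfactor]
  exact (continuous_primitive hf 0).rexp.mul (continuous_primitive hk t).neg

end ExpNegIntegral

section Orderings

variable {ι : Type*}

/-- The orderings `Π(S)` of a finite set, as lists. -/
def orderings (S : Finset ι) : Finset (List ι) := ⟨S.val.lists, Multiset.lists_nodup_finset S⟩

lemma mem_orderings {S : Finset ι} {L : List ι} : L ∈ orderings S ↔ (L : Multiset ι) = S.val :=
  (Multiset.mem_lists_iff _ _).trans eq_comm

lemma nil_notMem_orderings {S : Finset ι} (hS : S.Nonempty) : [] ∉ orderings S := by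
  simpa [mem_orderings, eq_comm] using hS.ne_empty

lemma cons_mem_orderings [DecidableEq ι] {S : Finset ι} {i : ι} {L : List ι} :
    i :: L ∈ orderings S ↔ i ∈ S ∧ L ∈ orderings (S.erase i) := by
  simp only [mem_orderings, erase_val, ← Multiset.cons_coe]
  constructor
  · intro h
    exact ⟨by simp [← mem_val, ← h], by rw [← h, Multiset.erase_cons_head]⟩
  · rintro ⟨hi, h⟩
    rw [h, Multiset.cons_erase hi]

lemma sum_orderings_eq_sum_sum_cons [DecidableEq ι] {M : Type*} [AddCommMonoid M] {S : Finset ι}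
    (hS : S.Nonempty) (g : List ι → M) :
    ∑ L ∈ orderings S, g L = ∑ i ∈ S, ∑ L ∈ orderings (S.erase i), g (i :: L) := by
  rw [sum_sigma']
  refine (sum_nbij (fun p : Σ _ : ι, List ι => p.1 :: p.2) (fun p hp => ?_) (fun p _ q _ h => ?_)
    (fun L hL => ?_) fun _ _ => rfl).symm
  · exact cons_mem_orderings.2 (mem_sigma.1 hp)
  · simp only [List.cons.injEq] at h
    exact Sigma.ext h.1 (heq_of_eq h.2)
  · cases L with
    | nil => exact absurd hL (nil_notMem_orderings hS)
    | cons i L => exact ⟨⟨i, L⟩, mem_sigma.2 (cons_mem_orderings.1 hL), rfl⟩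

end Orderings

lemma sum_sdiff_sum_Icc_insert_comm {ι M : Type*} [DecidableEq ι] [AddCommMonoid M]
    (E F : Finset ι) (φ : ι → Finset ι → M) :
    ∑ i ∈ F \ E, ∑ D ∈ Icc (insert i E) F, φ i D = ∑ D ∈ Ioc E F, ∑ i ∈ D \ E, φ i D := by
  refine sum_comm' fun i D => ?_
  simp only [mem_sdiff, mem_Icc, mem_Ioc, insert_subset_iff]
  constructor
  · rintro ⟨⟨-, hiE⟩, ⟨hiD, hED⟩, hDF⟩
    exact ⟨⟨hiD, hiE⟩, ⟨hED, fun hDE => hiE (hDE hiD)⟩, hDF⟩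
  · rintro ⟨⟨hiD, hiE⟩, ⟨hED, -⟩, hDF⟩
    exact ⟨⟨hDF hiD, hiE⟩, ⟨hiD, hED⟩, hDF⟩

section Kernel

variable {ι : Type*} [Fintype ι] [DecidableEq ι] {lam : Finset ι → Finset ι → ℝ → ℝ}

/-- Density of the first default, that of `i`, at time `v`, starting from `E` at time `s`. -/
noncomputable def jumpDensity (lam : Finset ι → Finset ι → ℝ → ℝ) (E : Finset ι) (i : ι)
    (s v : ℝ) : ℝ :=
  Real.exp (-∫ u in s..v, lamTot lam E u) * lam E (insert i E) v

lemma Hchain_cons (E : Finset ι) (i : ι) (L : List ι) (s t : ℝ) :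
    Hchain lam E (i :: L) s t
      = ∫ v in s..t, jumpDensity lam E i s v * Hchain lam (insert i E) L v t :=
  rfl

lemma Gker_eq_sum_orderings (E F : Finset ι) (s t : ℝ) :
    Gker lam E F s t = ∑ L ∈ orderings (F \ E), Hchain lam E L s t := by
  change _ = (((F \ E).val.lists).map _).sum
  rw [Gker, ← coe_toList (F \ E), Multiset.lists_coe, Multiset.map_coe, Multiset.sum_coe]

lemma Gker_self (E : Finset ι) (s t : ℝ) :
    Gker lam E E s t = Real.exp (-∫ u in s..t, lamTot lam E u) := by
  simp [Gker, Hchain]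

variable (hint : ∀ (E F : Finset ι) (a b : ℝ), IntervalIntegrable (lam E F) volume a b)
include hint

lemma intervalIntegrable_lamTot (E : Finset ι) (a b : ℝ) :
    IntervalIntegrable (lamTot lam E) volume a b := by
  have hsum : lamTot lam E = ∑ i ∈ Eᶜ, lam E (insert i E) :=
    funext fun t => (sum_apply t _ _).symm
  exact hsum ▸ IntervalIntegrable.sum _ fun i _ => hint E (insert i E) a b

lemma Gker_self_mul_Gker_self (E : Finset ι) (s u t : ℝ) :
    Gker lam E E s u * Gker lam E E u t = Gker lam E E s t := by
  simp only [Gker_self, ← exp_neg_integral_eq_mul (intervalIntegrable_lamTot hint E)]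

lemma jumpDensity_eq_Gker_self_mul (E : Finset ι) (i : ι) (s u v : ℝ) :
    jumpDensity lam E i s v = Gker lam E E s u * jumpDensity lam E i u v := by
  rw [jumpDensity, jumpDensity, Gker_self, exp_neg_integral_eq_mul
    (intervalIntegrable_lamTot hint E) s u v, mul_assoc]

lemma intervalIntegrable_jumpDensity_mul (E : Finset ι) (i : ι) (s : ℝ) {h : ℝ → ℝ}
    (hh : Continuous h) (a b : ℝ) :
    IntervalIntegrable (fun v => jumpDensity lam E i s v * h v) volume a b :=
  ((hint E _ a b).continuousOn_mul (continuous_exp_neg_integral_upper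
    (intervalIntegrable_lamTot hint E) s).continuousOn).mul_continuousOn hh.continuousOn

lemma continuous_Hchain_lower (L : List ι) (E : Finset ι) (t : ℝ) :
    Continuous fun s => Hchain lam E L s t := by
  induction L generalizing E with
  | nil => exact continuous_exp_neg_integral_lower (intervalIntegrable_lamTot hint E) t
  | cons i L ih =>
    simp only [Hchain_cons, jumpDensity, mul_assoc]
    exact continuous_integral_exp_neg_integral_mul_lower (intervalIntegrable_lamTot hint E)
      (fun a b => (hint E _ a b).mul_continuousOn (ih _).continuousOn) t

lemma continuous_Gker_lower (E F : Finset ι) (t : ℝ) : Continuous fun s => Gker lam E F s t := by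
  simp only [Gker_eq_sum_orderings]
  exact continuous_finsetSum _ fun L _ => continuous_Hchain_lower hint L E t

lemma Gker_eq_sum_integral_jumpDensity {E F : Finset ι} (hEF : (F \ E).Nonempty) (s t : ℝ) :
    Gker lam E F s t = ∑ i ∈ F \ E,
      ∫ v in s..t, jumpDensity lam E i s v * Gker lam (insert i E) F v t := by
  rw [Gker_eq_sum_orderings, sum_orderings_eq_sum_sum_cons hEF]
  refine sum_congr rfl fun i _ => ?_
  simp only [Hchain_cons, Gker_eq_sum_orderings, sdiff_insert, mul_sum]
  exact (integral_finsetSum fun L _ =>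
    intervalIntegrable_jumpDensity_mul hint E i s (continuous_Hchain_lower hint L _ t) s t).symm

lemma sum_integral_jumpDensity_eq_Gker_self_mul {E F : Finset ι} (hEF : (F \ E).Nonempty)
    (s u t : ℝ) :
    ∑ i ∈ F \ E, ∫ v in u..t, jumpDensity lam E i s v * Gker lam (insert i E) F v t
      = Gker lam E E s u * Gker lam E F u t := by
  simp only [jumpDensity_eq_Gker_self_mul hint E _ s u, mul_assoc,
    intervalIntegral.integral_const_mul, ← mul_sum, ← Gker_eq_sum_integral_jumpDensity hint hEF]

lemma sum_integral_jumpDensity_eq_sum_Ioc {E F : Finset ι} {s u t : ℝ}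
    (ih : ∀ i ∈ F \ E, ∀ v ∈ Set.uIcc s u, Gker lam (insert i E) F v t
      = ∑ D ∈ Icc (insert i E) F, Gker lam (insert i E) D v u * Gker lam D F u t) :
    ∑ i ∈ F \ E, ∫ v in s..u, jumpDensity lam E i s v * Gker lam (insert i E) F v t
      = ∑ D ∈ Ioc E F, Gker lam E D s u * Gker lam D F u t := by
  calc _ = ∑ i ∈ F \ E, ∑ D ∈ Icc (insert i E) F,
        (∫ v in s..u, jumpDensity lam E i s v * Gker lam (insert i E) D v u)
          * Gker lam D F u t := by
        refine sum_congr rfl fun i hi => ?_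
        rw [integral_congr fun v hv => by rw [ih i hi v hv, mul_sum],
          intervalIntegral.integral_finsetSum]
        · simp only [← mul_assoc, intervalIntegral.integral_mul_const]
        · exact fun D _ => intervalIntegrable_jumpDensity_mul hint E i s
            ((continuous_Gker_lower hint _ D u).mul continuous_const) s u
    _ = ∑ D ∈ Ioc E F, (∑ i ∈ D \ E,
        ∫ v in s..u, jumpDensity lam E i s v * Gker lam (insert i E) D v u)
          * Gker lam D F u t := by
        simp only [sum_sdiff_sum_Icc_insert_comm, sum_mul]
    _ = _ := sum_congr rfl fun D hD => by
        rw [← Gker_eq_sum_integral_jumpDensity hint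
          (sdiff_nonempty.2 (not_le_of_gt (mem_Ioc.1 hD).1))]

end Kernel

/-- Chapman–Kolmogorov / semigroup property of the transition kernel `G`. -/
theorem Gker_chapman_kolmogorov {ι : Type*} [Fintype ι] [DecidableEq ι]
    (lam : Finset ι → Finset ι → ℝ → ℝ)
    (hint : ∀ (E F : Finset ι) (a b : ℝ),
      IntervalIntegrable (lam E F) MeasureTheory.volume a b)
    (E F : Finset ι) (hEF : E ⊆ F) (s u t : ℝ) (hsu : s ≤ u)
    (hut : u ≤ t) :
    Gker lam E F s t = ∑ D ∈ Finset.Icc E F, Gker lam E D s u * Gker lam D F u t := by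
  rcases eq_or_ne E F with rfl | hne
  · rw [Icc_self, sum_singleton, Gker_self_mul_Gker_self hint]
  have hFE : (F \ E).Nonempty := sdiff_nonempty.2 fun hFE => hne (hEF.antisymm hFE)
  have ih : ∀ i ∈ F \ E, ∀ v ∈ Set.uIcc s u, Gker lam (insert i E) F v t
      = ∑ D ∈ Icc (insert i E) F, Gker lam (insert i E) D v u * Gker lam D F u t :=
    fun i hi v hv => Gker_chapman_kolmogorov lam hint (insert i E) F
      (insert_subset (mem_sdiff.1 hi).1 hEF) v u t (Set.uIcc_of_le hsu ▸ hv).2 hut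
  calc Gker lam E F s t
      = ∑ i ∈ F \ E, ((∫ v in s..u, jumpDensity lam E i s v * Gker lam (insert i E) F v t)
          + ∫ v in u..t, jumpDensity lam E i s v * Gker lam (insert i E) F v t) := by
        rw [Gker_eq_sum_integral_jumpDensity hint hFE]
        refine sum_congr rfl fun i _ => (integral_add_adjacent_intervals ?_ ?_).symm <;>
          exact intervalIntegrable_jumpDensity_mul hint E i s (continuous_Gker_lower hint _ F t) _ _
    _ = ∑ D ∈ Icc E F, Gker lam E D s u * Gker lam D F u t := by
        rw [sum_add_distrib, sum_integral_jumpDensity_eq_sum_Ioc hint ih,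
          sum_integral_jumpDensity_eq_Gker_self_mul hint hFE, sum_Ioc_add_eq_sum_Icc hEF]
termination_by (F \ E).card
decreasing_by
  rw [sdiff_insert]
  exact card_erase_lt_of_mem hi
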